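/- arXiv:1603.06167 — 6 statements merged into one kernel-verified Lean document; each statement's English description precedes it below -/
import Mathlib

section
/- Every parallel refractor u from Ω to Σ satisfies the uniform Lipschitz estimate |u(x₂) − u(x₁)| ≤ |x₂ − x₁|/√(κ²−1) for all x₁, x₂ ∈ Ω; in particular, parallel refractors are Lipschitz with a constant depending only on κ. -/
/-!
Each lower hyperboloid sheet `φ_{Y,b}` is `1/√(κ²−1)`-Lipschitz, because
`√(κ²−1) · φ_{Y,b}(x)` differs from `−√(b²/(κ²−1) + |x − y|²)` by a constant, and
`x ↦ √(c + |x − y|²)` is 1-Lipschitz. A function touched from below at every point of `Ω` by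
`L`-Lipschitz functions is itself `L`-Lipschitz on `Ω`: at `x₁` compare `u` with the sheet
supporting it at `x₁`, and symmetrically at `x₂`.
-/

noncomputable section

open scoped RealInnerProductSpace

/-- ℝⁿ with the Euclidean norm. -/
abbrev E (n : ℕ) : Type := EuclideanSpace ℝ (Fin n)

/-- Euclidean norm of a point of ℝ^{n+1} = ℝⁿ × ℝ. -/
def pnorm {n : ℕ} (W : E n × ℝ) : ℝ := Real.sqrt (‖W.1‖ ^ 2 + W.2 ^ 2)

/-- c(X,Y) = κ(y_{n+1} − x_{n+1}) − |X − Y|. -/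
def cfun {n : ℕ} (κ : ℝ) (X Y : E n × ℝ) : ℝ := κ * (Y.2 - X.2) - pnorm (X - Y)

/-- φ_{Y,b}(x): lower sheet of the two-sheeted hyperboloid with upper focus Y. -/
def hypb {n : ℕ} (κ : ℝ) (Y : E n × ℝ) (b : ℝ) (x : E n) : ℝ :=
  Y.2 - κ * b / (κ ^ 2 - 1) -
    Real.sqrt (b ^ 2 / (κ ^ 2 - 1) ^ 2 + ‖x - Y.1‖ ^ 2 / (κ ^ 2 - 1))

/-- φ(x, Y, X₀) = φ_{Y, c(X₀,Y)}(x). -/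
def hyp {n : ℕ} (κ : ℝ) (x : E n) (Y X₀ : E n × ℝ) : ℝ := hypb κ Y (cfun κ X₀ Y) x

theorem Real.sqrt_add_norm_sq_sub_le {F : Type*} [SeminormedAddCommGroup F] {c : ℝ}
    (hc : 0 ≤ c) (x y : F) :
    √(c + ‖x‖ ^ 2) - √(c + ‖y‖ ^ 2) ≤ ‖x - y‖ := by
  have hy : ‖y‖ ≤ √(c + ‖y‖ ^ 2) := Real.le_sqrt_of_sq_le (by linarith)
  have hx : ‖x‖ ≤ ‖y‖ + ‖x - y‖ := norm_le_norm_add_norm_sub' x y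
  have hsq : √(c + ‖y‖ ^ 2) ^ 2 = c + ‖y‖ ^ 2 := Real.sq_sqrt (by positivity)
  suffices √(c + ‖x‖ ^ 2) ≤ √(c + ‖y‖ ^ 2) + ‖x - y‖ by linarith
  refine Real.sqrt_le_iff.2 ⟨by positivity, ?_⟩
  nlinarith [norm_nonneg x, norm_nonneg (x - y), mul_le_mul_of_nonneg_right hy (norm_nonneg (x - y))]

theorem hypb_eq {n : ℕ} {κ : ℝ} (hκ : 1 < κ) (Y : E n × ℝ) (b : ℝ) (x : E n) :
    hypb κ Y b x = Y.2 - κ * b / (κ ^ 2 - 1) -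
      √(b ^ 2 / (κ ^ 2 - 1) + ‖x - Y.1‖ ^ 2) / √(κ ^ 2 - 1) := by
  have hm : 0 < κ ^ 2 - 1 := by nlinarith
  rw [hypb, ← Real.sqrt_div (by positivity)]
  congr 3
  field_simp

theorem hypb_sub_hypb_le {n : ℕ} {κ : ℝ} (hκ : 1 < κ) (Y : E n × ℝ) (b : ℝ) (x₁ x₂ : E n) :
    hypb κ Y b x₁ - hypb κ Y b x₂ ≤ (√(κ ^ 2 - 1))⁻¹ * dist x₁ x₂ := by
  have hlip := Real.sqrt_add_norm_sq_sub_le (c := b ^ 2 / (κ ^ 2 - 1))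
    (div_nonneg (sq_nonneg b) (by nlinarith)) (x₂ - Y.1) (x₁ - Y.1)
  rw [sub_sub_sub_cancel_right, ← dist_eq_norm x₂ x₁, dist_comm] at hlip
  calc hypb κ Y b x₁ - hypb κ Y b x₂
      = (√(κ ^ 2 - 1))⁻¹ * (√(b ^ 2 / (κ ^ 2 - 1) + ‖x₂ - Y.1‖ ^ 2)
          - √(b ^ 2 / (κ ^ 2 - 1) + ‖x₁ - Y.1‖ ^ 2)) := by
        rw [hypb_eq hκ, hypb_eq hκ]; ring
    _ ≤ (√(κ ^ 2 - 1))⁻¹ * dist x₁ x₂ := by gcongr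

theorem abs_sub_le_of_forall_exists_lipschitz_support {α : Type*} [PseudoMetricSpace α]
    {Ω : Set α} {u : α → ℝ} {L : ℝ}
    (h : ∀ x₀ ∈ Ω, ∃ φ : α → ℝ, (∀ x y, φ x - φ y ≤ L * dist x y) ∧
      (∀ x ∈ Ω, φ x ≤ u x) ∧ u x₀ = φ x₀) :
    ∀ x₁ ∈ Ω, ∀ x₂ ∈ Ω, |u x₂ - u x₁| ≤ L * dist x₂ x₁ := by
  have one_sided : ∀ x₁ ∈ Ω, ∀ x₂ ∈ Ω, u x₁ - u x₂ ≤ L * dist x₁ x₂ := by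
    intro x₁ h₁ x₂ h₂
    obtain ⟨φ, hφ, hle, heq⟩ := h x₁ h₁
    linarith [hφ x₁ x₂, hle x₂ h₂]
  intro x₁ h₁ x₂ h₂
  rw [abs_sub_le_iff]
  exact ⟨one_sided x₂ h₂ x₁ h₁, dist_comm x₁ x₂ ▸ one_sided x₁ h₁ x₂ h₂⟩

theorem stmt_1_general {n : ℕ} (κ : ℝ) (hκ : 1 < κ) (Ω : Set (E n)) (Tgt : Set (E n × ℝ)) (Δ : ℝ)
    (u : E n → ℝ)
    (hu : ∀ x₀ ∈ Ω, ∃ Y ∈ Tgt, ∃ b : ℝ, 0 < b ∧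
      b < κ * Y.2 - Real.sqrt (Y.2 ^ 2 + Δ ^ 2) ∧
      (∀ x ∈ Ω, hypb κ Y b x ≤ u x) ∧ u x₀ = hypb κ Y b x₀) :
    ∀ x₁ ∈ Ω, ∀ x₂ ∈ Ω, |u x₂ - u x₁| ≤ ‖x₂ - x₁‖ / Real.sqrt (κ ^ 2 - 1) := by
  have hsupport : ∀ x₀ ∈ Ω, ∃ φ : E n → ℝ,
      (∀ x y, φ x - φ y ≤ (√(κ ^ 2 - 1))⁻¹ * dist x y) ∧ (∀ x ∈ Ω, φ x ≤ u x) ∧ u x₀ = φ x₀ := by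
    intro x₀ h₀
    obtain ⟨Y, -, b, -, -, hle, heq⟩ := hu x₀ h₀
    exact ⟨hypb κ Y b, hypb_sub_hypb_le hκ Y b, hle, heq⟩
  intro x₁ h₁ x₂ h₂
  simpa only [dist_eq_norm, inv_mul_eq_div] using
    abs_sub_le_of_forall_exists_lipschitz_support hsupport x₁ h₁ x₂ h₂

/-- parallel refractors are uniformly Lipschitz with constant 1/√(κ²−1). -/
theorem stmt_1 {n : ℕ} (hn : 1 ≤ n) (κ : ℝ) (hκ : 1 < κ)
    (Ω : Set (E n)) (hΩo : IsOpen Ω) (hΩb : Bornology.IsBounded Ω) (hΩne : Ω.Nonempty)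
    (Tgt : Set (E n × ℝ)) (hTc : IsCompact Tgt) (hTne : Tgt.Nonempty)
    (hTpos : ∀ Y ∈ Tgt, 0 < Y.2)
    (Δ : ℝ) (hΔ : ∀ Y ∈ Tgt, Metric.diam (Ω ∪ {Y.1}) ≤ Δ)
    (hinf : ∀ Y ∈ Tgt, Δ / Real.sqrt (κ ^ 2 - 1) < Y.2)
    (u : E n → ℝ) (hupos : ∀ x ∈ Ω, 0 < u x)
    (hu : ∀ x₀ ∈ Ω, ∃ Y ∈ Tgt, ∃ b : ℝ, 0 < b ∧
      b < κ * Y.2 - Real.sqrt (Y.2 ^ 2 + Δ ^ 2) ∧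
      (∀ x ∈ Ω, hypb κ Y b x ≤ u x) ∧ u x₀ = hypb κ Y b x₀) :
    ∀ x₁ ∈ Ω, ∀ x₂ ∈ Ω, |u x₂ - u x₁| ≤ ‖x₂ - x₁‖ / Real.sqrt (κ ^ 2 - 1) :=
  stmt_1_general κ hκ Ω Tgt Δ u hu
end
end

section
/- Let κ > 1, x ∈ ℝⁿ, and Y = (y, y_{n+1}) ∈ ℝ^{n+1}. At every X₀ = (x₀, x⁰_{n+1}) with c(X₀,Y) > 0 and X₀ ≠ Y, the partial derivative of φ(x, Y, X₀) with respect to the last coordinate x⁰_{n+1} of X₀ satisfies |∂φ/∂x⁰_{n+1}(x, Y, X₀)| ≤ (κ+1)/(κ−1). -/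
noncomputable section

open scoped RealInnerProductSpace

/-!
By the chain rule, `∂φ/∂x⁰_{n+1}` is the product of `∂_b φ_{Y,b}(x)` at `b = c(X₀,Y)` and
`∂c(X₀,Y)/∂x⁰_{n+1} = -κ - (x⁰_{n+1} - y_{n+1}) / |X₀ - Y|`. The second factor is at most `κ + 1`
in absolute value since the last coordinate of `X₀ - Y` is at most `|X₀ - Y|`. The first is
`-(κ + b / ((κ² - 1) R)) / (κ² - 1)` with `R` the square root in `φ_{Y,b}`, and `(κ² - 1) R ≥ |b|`,
so it is at most `(κ + 1) / (κ² - 1)`. The product of the two bounds is `(κ + 1) / (κ - 1)`.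
-/

section Pnorm

variable {n : ℕ}

lemma pnorm_pos {W : E n × ℝ} (hW : W ≠ 0) : 0 < pnorm W := by
  refine Real.sqrt_pos.mpr ?_
  rcases eq_or_ne W.1 0 with h1 | h1
  · have h2 : W.2 ≠ 0 := fun h2 => hW (Prod.ext h1 h2)
    positivity
  · have := norm_pos_iff.mpr h1
    positivity

lemma abs_snd_le_pnorm (W : E n × ℝ) : |W.2| ≤ pnorm W := by
  rw [← Real.sqrt_sq_eq_abs]
  exact Real.sqrt_le_sqrt (le_add_of_nonneg_left (sq_nonneg _))

lemma hasDerivAt_pnorm_snd (v : E n) {t : ℝ} (h : ((v, t) : E n × ℝ) ≠ 0) :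
    HasDerivAt (fun s : ℝ => pnorm ((v, s) : E n × ℝ)) (t / pnorm ((v, t) : E n × ℝ)) t := by
  have hsq : HasDerivAt (fun s : ℝ => ‖v‖ ^ 2 + s ^ 2) (2 * t) t := by
    simpa using (hasDerivAt_pow 2 t).const_add (‖v‖ ^ 2)
  refine (hsq.sqrt (Real.sqrt_pos.mp (pnorm_pos h)).ne').congr_deriv ?_
  field_simp
  rfl

end Pnorm

lemma hasDerivAt_cfun_snd {n : ℕ} (κ : ℝ) {X Y : E n × ℝ} (hne : X ≠ Y) :
    HasDerivAt (fun t : ℝ => cfun κ (X.1, t) Y) (-κ - (X.2 - Y.2) / pnorm (X - Y)) X.2 := by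
  have hpnorm := (hasDerivAt_pnorm_snd (X.1 - Y.1) (t := X.2 - Y.2)
    (sub_ne_zero.mpr hne)).comp_sub_const X.2 Y.2
  have hlin : HasDerivAt (fun t : ℝ => κ * (Y.2 - t)) (-κ) X.2 := by
    simpa using ((hasDerivAt_id X.2).const_sub Y.2).const_mul κ
  exact hlin.sub hpnorm

lemma abs_deriv_cfun_snd_le {n : ℕ} {κ : ℝ} (hκ : 0 ≤ κ) {X Y : E n × ℝ} (hne : X ≠ Y) :
    |-κ - (X.2 - Y.2) / pnorm (X - Y)| ≤ κ + 1 := by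
  have hquot : |(X.2 - Y.2) / pnorm (X - Y)| ≤ 1 := by
    rw [abs_div, abs_of_pos (pnorm_pos (sub_ne_zero.mpr hne))]
    exact div_le_one_of_le₀ (abs_snd_le_pnorm (X - Y)) (pnorm_pos (sub_ne_zero.mpr hne)).le
  calc |-κ - (X.2 - Y.2) / pnorm (X - Y)|
      ≤ |-κ| + |(X.2 - Y.2) / pnorm (X - Y)| := abs_sub _ _
    _ ≤ κ + 1 := by rw [abs_neg, abs_of_nonneg hκ]; linarith

def hypbRadius {n : ℕ} (κ : ℝ) (Y : E n × ℝ) (b : ℝ) (x : E n) : ℝ :=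
  Real.sqrt (b ^ 2 / (κ ^ 2 - 1) ^ 2 + ‖x - Y.1‖ ^ 2 / (κ ^ 2 - 1))

section Hyperboloid

variable {n : ℕ} {κ : ℝ} (Y : E n × ℝ) (x : E n)

lemma abs_le_mul_hypbRadius (hκ : 1 < κ) (b : ℝ) : |b| ≤ (κ ^ 2 - 1) * hypbRadius κ Y b x := by
  have hκ2 : 0 < κ ^ 2 - 1 := by nlinarith
  rw [← div_le_iff₀' hκ2, ← abs_of_pos hκ2, ← abs_div, ← Real.sqrt_sq_eq_abs, div_pow]
  exact Real.sqrt_le_sqrt (le_add_of_nonneg_right (by positivity))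

lemma hypbRadius_pos (hκ : 1 < κ) {b : ℝ} (hb : b ≠ 0) : 0 < hypbRadius κ Y b x := by
  have hκ2 : 0 < κ ^ 2 - 1 := by nlinarith
  have := abs_le_mul_hypbRadius Y x hκ b
  have := abs_pos.mpr hb
  nlinarith

lemma hasDerivAt_hypb_param (hκ : 1 < κ) {b : ℝ} (hb : b ≠ 0) :
    HasDerivAt (fun b => hypb κ Y b x)
      (-(κ + b / ((κ ^ 2 - 1) * hypbRadius κ Y b x)) / (κ ^ 2 - 1)) b := by
  have hκ2 : 0 < κ ^ 2 - 1 := by nlinarith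
  have hR := hypbRadius_pos Y x hκ hb
  have hsq : HasDerivAt (fun b : ℝ => b ^ 2 / (κ ^ 2 - 1) ^ 2 + ‖x - Y.1‖ ^ 2 / (κ ^ 2 - 1))
      (2 * b / (κ ^ 2 - 1) ^ 2) b := by
    simpa using ((hasDerivAt_pow 2 b).div_const ((κ ^ 2 - 1) ^ 2)).add_const
      (‖x - Y.1‖ ^ 2 / (κ ^ 2 - 1))
  have hlin : HasDerivAt (fun b : ℝ => Y.2 - κ * b / (κ ^ 2 - 1)) (-(κ / (κ ^ 2 - 1))) b := by
    simpa using (((hasDerivAt_id b).const_mul κ).div_const (κ ^ 2 - 1)).const_sub Y.2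
  have hsqrt : HasDerivAt (fun b => hypbRadius κ Y b x)
      (2 * b / (κ ^ 2 - 1) ^ 2 / (2 * hypbRadius κ Y b x)) b :=
    hsq.sqrt (Real.sqrt_pos.mp hR).ne'
  refine (hlin.sub hsqrt).congr_deriv ?_
  field_simp
  ring

lemma abs_deriv_hypb_param_le (hκ : 1 < κ) {b : ℝ} (hb : b ≠ 0) :
    |-(κ + b / ((κ ^ 2 - 1) * hypbRadius κ Y b x)) / (κ ^ 2 - 1)| ≤ (κ + 1) / (κ ^ 2 - 1) := by
  have hκ2 : 0 < κ ^ 2 - 1 := by nlinarith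
  have hquot : |b / ((κ ^ 2 - 1) * hypbRadius κ Y b x)| ≤ 1 := by
    have hpos : 0 < (κ ^ 2 - 1) * hypbRadius κ Y b x := mul_pos hκ2 (hypbRadius_pos Y x hκ hb)
    rw [abs_div, abs_of_pos hpos]
    exact div_le_one_of_le₀ (abs_le_mul_hypbRadius Y x hκ b) hpos.le
  rw [abs_div, abs_neg, abs_of_pos hκ2]
  gcongr
  calc |κ + b / ((κ ^ 2 - 1) * hypbRadius κ Y b x)|
      ≤ |κ| + |b / ((κ ^ 2 - 1) * hypbRadius κ Y b x)| := abs_add_le _ _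
    _ ≤ κ + 1 := by rw [abs_of_pos (by linarith)]; linarith

end Hyperboloid

theorem stmt_2_general {n : ℕ} (κ : ℝ) (hκ : 1 < κ)
    (x : E n) (Y X₀ : E n × ℝ) (hc : 0 < cfun κ X₀ Y) (hne : X₀ ≠ Y) :
    DifferentiableAt ℝ (fun t : ℝ => hyp κ x Y (X₀.1, t)) X₀.2 ∧
    |deriv (fun t : ℝ => hyp κ x Y (X₀.1, t)) X₀.2| ≤ (κ + 1) / (κ - 1) := by
  have hcomp : HasDerivAt (fun t : ℝ => hyp κ x Y (X₀.1, t)) _ X₀.2 :=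
    (hasDerivAt_hypb_param Y x hκ hc.ne').comp (h₂ := fun b => hypb κ Y b x) X₀.2
      (hasDerivAt_cfun_snd κ hne)
  refine ⟨hcomp.differentiableAt, ?_⟩
  rw [hcomp.deriv, abs_mul]
  have hκ2 : 0 < κ ^ 2 - 1 := by nlinarith
  calc _ ≤ (κ + 1) / (κ ^ 2 - 1) * (κ + 1) :=
        mul_le_mul (abs_deriv_hypb_param_le Y x hκ hc.ne') (abs_deriv_cfun_snd_le (by linarith) hne)
          (abs_nonneg _) (by positivity)
    _ = (κ + 1) / (κ - 1) := by
        have : κ - 1 ≠ 0 := by linarith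
        field_simp
        ring

/-- bound for the derivative of φ in the last coordinate of X₀. -/
theorem stmt_2 {n : ℕ} (hn : 1 ≤ n) (κ : ℝ) (hκ : 1 < κ)
    (x : E n) (Y X₀ : E n × ℝ) (hc : 0 < cfun κ X₀ Y) (hne : X₀ ≠ Y) :
    DifferentiableAt ℝ (fun t : ℝ => hyp κ x Y (X₀.1, t)) X₀.2 ∧
    |deriv (fun t : ℝ => hyp κ x Y (X₀.1, t)) X₀.2| ≤ (κ + 1) / (κ - 1) :=
  stmt_2_general κ hκ x Y X₀ hc hne
end
end

section
/- Under the structural setup, let X̄ ∈ C_Ω, Y ∈ Σ, x₀ ∈ Ω, set X₀ = (x₀, φ(x₀, Y, X̄)), and assume X₀* = (x₀, φ(x₀, Y, X̄) + h) ∈ C_Ω for some h > 0. Then 0 ≤ φ(x, Y, X₀*) − φ(x, Y, X₀) ≤ ((κ+1)/(κ−1))·h for all x ∈ Ω. -/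
noncomputable section

open scoped RealInnerProductSpace

/-!
Raising the base point by `h` lowers the parameter `b = c(X₀, Y)` by an amount between
`(κ - 1) h` and `(κ + 1) h`, because `|X₀ - Y|` changes by at most `h`. In turn `φ_{Y,b}(x)`
decreases in `b` with slope between `1/(κ + 1)` and `1/(κ - 1)`: its linear part has slope
`κ/(κ² - 1)` and its square-root part is `1/(κ² - 1)`-Lipschitz in `b`. Both estimates rest on
`u ↦ √(u² + R)` being `1`-Lipschitz.
-/

open Set

lemma abs_sqrt_sq_add_sub_sqrt_sq_add_le (u v : ℝ) {R : ℝ} (hR : 0 ≤ R) :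
    |√(u ^ 2 + R) - √(v ^ 2 + R)| ≤ |u - v| := by
  have hu : √(u ^ 2 + R) ^ 2 = u ^ 2 + R := Real.sq_sqrt (by positivity)
  have hv : √(v ^ 2 + R) ^ 2 = v ^ 2 + R := Real.sq_sqrt (by positivity)
  have hu_le : |u| ≤ √(u ^ 2 + R) := Real.abs_le_sqrt (by linarith)
  have hv_le : |v| ≤ √(v ^ 2 + R) := Real.abs_le_sqrt (by linarith)
  have h₁ := abs_sub_abs_le_abs_sub u v
  have h₂ := abs_sub_abs_le_abs_sub v u
  rw [abs_sub_comm v u] at h₂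
  rw [abs_sub_le_iff]
  constructor <;>
    nlinarith [sq_abs u, sq_abs v, abs_nonneg u, abs_nonneg v, abs_nonneg (u - v)]

variable {n : ℕ}

lemma cfun_sub_cfun_mem_Icc (κ : ℝ) (x : E n) (Y : E n × ℝ) (t : ℝ) {h : ℝ} (hh : 0 ≤ h) :
    cfun κ (x, t) Y - cfun κ (x, t + h) Y ∈ Icc ((κ - 1) * h) ((κ + 1) * h) := by
  have hpnorm : ∀ s, pnorm ((x, s) - Y) = √((s - Y.2) ^ 2 + ‖x - Y.1‖ ^ 2) := fun s => by
    simp only [pnorm, Prod.fst_sub, Prod.snd_sub, add_comm]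
  have hlip := abs_le.mp <|
    abs_sqrt_sq_add_sub_sqrt_sq_add_le (t + h - Y.2) (t - Y.2) (sq_nonneg ‖x - Y.1‖)
  rw [show t + h - Y.2 - (t - Y.2) = h by ring, abs_of_nonneg hh] at hlip
  simp only [cfun, hpnorm]
  constructor <;> linarith [hlip.1, hlip.2]

lemma hypb_sub_hypb_mem_Icc {κ : ℝ} (hκ : 1 < κ) (Y : E n × ℝ) (x : E n) {b₁ b₂ : ℝ}
    (hb : b₂ ≤ b₁) :
    hypb κ Y b₂ x - hypb κ Y b₁ x ∈ Icc ((b₁ - b₂) / (κ + 1)) ((b₁ - b₂) / (κ - 1)) := by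
  have hc : 0 < κ ^ 2 - 1 := by nlinarith
  set R := ‖x - Y.1‖ ^ 2 / (κ ^ 2 - 1)
  set q := (b₁ - b₂) / (κ ^ 2 - 1)
  have hq : 0 ≤ q := div_nonneg (sub_nonneg.mpr hb) hc.le
  have hdiff : hypb κ Y b₂ x - hypb κ Y b₁ x =
      κ * q + (√((b₁ / (κ ^ 2 - 1)) ^ 2 + R) - √((b₂ / (κ ^ 2 - 1)) ^ 2 + R)) := by
    simp only [hypb, div_pow, q, R]
    ring
  have hlip := abs_le.mp <| abs_sqrt_sq_add_sub_sqrt_sq_add_le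
    (b₁ / (κ ^ 2 - 1)) (b₂ / (κ ^ 2 - 1)) (div_nonneg (sq_nonneg ‖x - Y.1‖) hc.le)
  rw [← sub_div, abs_of_nonneg hq] at hlip
  have hlower : (b₁ - b₂) / (κ + 1) = (κ - 1) * q := by
    simp only [q]; field_simp; ring
  have hupper : (b₁ - b₂) / (κ - 1) = (κ + 1) * q := by
    have : κ - 1 ≠ 0 := by linarith
    simp only [q]; field_simp; ring
  rw [hdiff, hlower, hupper]
  constructor <;> linarith [hlip.1, hlip.2]

theorem stmt_6_general {n : ℕ} (κ : ℝ) (hκ : 1 < κ)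
    (Ω : Set (E n))
    (Xbar : E n × ℝ)
    (Y : E n × ℝ) (x₀ : E n) (h : ℝ) (hh : 0 < h) :
    ∀ x ∈ Ω,
      0 ≤ hyp κ x Y (x₀, hyp κ x₀ Y Xbar + h) - hyp κ x Y (x₀, hyp κ x₀ Y Xbar) ∧
      hyp κ x Y (x₀, hyp κ x₀ Y Xbar + h) - hyp κ x Y (x₀, hyp κ x₀ Y Xbar)
        ≤ (κ + 1) / (κ - 1) * h := by
  intro x _
  obtain ⟨hb_low, hb_up⟩ := cfun_sub_cfun_mem_Icc κ x₀ Y (hyp κ x₀ Y Xbar) hh.le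
  have hb : 0 ≤ (κ - 1) * h := mul_nonneg (by linarith) hh.le
  obtain ⟨hφ_low, hφ_up⟩ := hypb_sub_hypb_mem_Icc hκ Y x (sub_nonneg.mp (hb.trans hb_low))
  refine ⟨hφ_low.trans' (div_nonneg (hb.trans hb_low) (by linarith)), hφ_up.trans ?_⟩
  rw [div_mul_eq_mul_div]
  exact div_le_div_of_nonneg_right hb_up (by linarith)

/-- monotonicity and continuity in the height of the base point
(Lemma on raising the focus-defining point). -/
theorem stmt_6 {n : ℕ} (hn : 1 ≤ n) (κ : ℝ) (hκ : 1 < κ)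
    (Ω : Set (E n)) (hΩo : IsOpen Ω) (hΩconv : Convex ℝ Ω)
    (hΩb : Bornology.IsBounded Ω) (hΩne : Ω.Nonempty)
    (Tgt : Set (E n × ℝ)) (hTc : IsCompact Tgt) (hTne : Tgt.Nonempty)
    (τ₀ τ₁ ω Δ : ℝ) (hτ₀ : 0 < τ₀) (hτ : τ₀ < τ₁) (hω : 0 < ω) (hΔpos : 0 < Δ)
    (hslab : ∀ Y ∈ Tgt, Y.2 ∈ Set.Icc τ₁ (τ₁ + ω))
    (hΔ : ∀ Y ∈ Tgt, Metric.diam (Ω ∪ {Y.1}) ≤ Δ)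
    (hcompat : max (κ * τ₀) (τ₀ + κ * Δ / (κ - 1)) ≤ τ₁)
    (Xbar : E n × ℝ) (hXbar : Xbar.1 ∈ Ω ∧ Xbar.2 ∈ Set.Icc 0 τ₀)
    (Y : E n × ℝ) (hY : Y ∈ Tgt) (x₀ : E n) (hx₀ : x₀ ∈ Ω) (h : ℝ) (hh : 0 < h)
    (hX₀s : x₀ ∈ Ω ∧ hyp κ x₀ Y Xbar + h ∈ Set.Icc 0 τ₀) :
    ∀ x ∈ Ω,
      0 ≤ hyp κ x Y (x₀, hyp κ x₀ Y Xbar + h) - hyp κ x Y (x₀, hyp κ x₀ Y Xbar) ∧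
      hyp κ x Y (x₀, hyp κ x₀ Y Xbar + h) - hyp κ x Y (x₀, hyp κ x₀ Y Xbar)
        ≤ (κ + 1) / (κ - 1) * h :=
  stmt_6_general κ hκ Ω Xbar Y x₀ h hh
end
end

section
/- Let n ≥ 1, λ ∈ (0,1), v̄, v̂ ∈ ℝⁿ, and v_λ = (1−λ)v̄ + λv̂. Let H̄, Ĥ, H_λ be positive real numbers satisfying the concavity inequality H_λ((1−λ)Ĥ + λH̄) ≤ H̄Ĥ (equivalently 1/H_λ ≥ (1−λ)/H̄ + λ/Ĥ). Define the vectors η̄ = (H̄v̄ − H_λv_λ, H_λ − H̄) ∈ ℝ^{n+1}, η̂ = (Ĥv̂ − H_λv_λ, H_λ − Ĥ) ∈ ℝ^{n+1}, and N_λ = (v_λ, −1) ∈ ℝ^{n+1}. Then every X ∈ ℝ^{n+1} with X·η̂ < 0 and X·η̄ < 0 satisfies X·N_λ ≤ 0. -/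
noncomputable section

open scoped RealInnerProductSpace

/-- Euclidean inner product on ℝ^{n+1} = ℝⁿ × ℝ. -/
def pdot {n : ℕ} (X W : E n × ℝ) : ℝ := ⟪X.1, W.1⟫ + X.2 * W.2

theorem pdot_add_right {n : ℕ} (X W W' : E n × ℝ) :
    pdot X (W + W') = pdot X W + pdot X W' := by
  simp only [pdot, Prod.fst_add, Prod.snd_add, inner_add_right]
  ring

theorem pdot_smul_right {n : ℕ} (X W : E n × ℝ) (a : ℝ) :
    pdot X (a • W) = a * pdot X W := by
  simp only [pdot, Prod.smul_fst, Prod.smul_snd, inner_smul_right, smul_eq_mul]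
  ring

/-- The weights `(1 - λ) Ĥ` and `λ H̄` make the `v̄, v̂` parts cancel, leaving a multiple of `N_λ`
whose coefficient `H̄ Ĥ - H_λ ((1 - λ) Ĥ + λ H̄)` is nonnegative exactly by concavity of `1 / H`. -/
theorem combination_eq_smul_normal {R V : Type*} [CommRing R] [AddCommGroup V] [Module R V]
    (lam Hb Hh Hl : R) (vb vh : V) :
    ((1 - lam) * Hh) • (Hb • vb - Hl • ((1 - lam) • vb + lam • vh), Hl - Hb) +
        (lam * Hb) • (Hh • vh - Hl • ((1 - lam) • vb + lam • vh), Hl - Hh) =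
      (Hb * Hh - Hl * ((1 - lam) * Hh + lam * Hb)) • ((1 - lam) • vb + lam • vh, (-1 : R)) := by
  ext
  · simp only [Prod.fst_add, Prod.smul_fst]
    module
  · simp only [Prod.snd_add, Prod.smul_snd, smul_eq_mul]
    ring

theorem neg_of_pos_combination_eq_mul {a b c p q r : ℝ} (ha : 0 < a) (hb : 0 < b) (hc : 0 ≤ c)
    (hp : p < 0) (hq : q < 0) (h : a * p + b * q = c * r) : r < 0 :=
  neg_of_mul_neg_right (h ▸ by nlinarith) hc

theorem stmt_11_general {n : ℕ} (lam : ℝ) (hlam : lam ∈ Set.Ioo (0:ℝ) 1)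
    (vb vh : E n) (Hb Hh Hl : ℝ) (hHb : 0 < Hb) (hHh : 0 < Hh)
    (hconc : Hl * ((1 - lam) * Hh + lam * Hb) ≤ Hb * Hh)
    (X : E n × ℝ)
    (h1 : pdot X (Hh • vh - Hl • ((1 - lam) • vb + lam • vh), Hl - Hh) < 0)
    (h2 : pdot X (Hb • vb - Hl • ((1 - lam) • vb + lam • vh), Hl - Hb) < 0) :
    pdot X ((1 - lam) • vb + lam • vh, (-1 : ℝ)) ≤ 0 := by
  have hcomb := congrArg (pdot X) (combination_eq_smul_normal lam Hb Hh Hl vb vh)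
  rw [pdot_add_right, pdot_smul_right, pdot_smul_right, pdot_smul_right] at hcomb
  refine (neg_of_pos_combination_eq_mul ?_ ?_ (sub_nonneg.2 hconc) h2 h1 hcomb).le
  · exact mul_pos (sub_pos.2 hlam.2) hHh
  · exact mul_pos hlam.1 hHb

/-- the key linear-algebra step in the maximum principle (DASM). -/
theorem stmt_11 {n : ℕ} (hn : 1 ≤ n) (lam : ℝ) (hlam : lam ∈ Set.Ioo (0:ℝ) 1)
    (vb vh : E n) (Hb Hh Hl : ℝ) (hHb : 0 < Hb) (hHh : 0 < Hh) (hHl : 0 < Hl)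
    (hconc : Hl * ((1 - lam) * Hh + lam * Hb) ≤ Hb * Hh)
    (X : E n × ℝ)
    (h1 : pdot X (Hh • vh - Hl • ((1 - lam) • vb + lam • vh), Hl - Hh) < 0)
    (h2 : pdot X (Hb • vb - Hl • ((1 - lam) • vb + lam • vh), Hl - Hb) < 0) :
    pdot X ((1 - lam) • vb + lam • vh, (-1 : ℝ)) ≤ 0 :=
  stmt_11_general lam hlam vb vh Hb Hh Hl hHb hHh hconc X h1 h2
end
end

section
/- (Maximum principle / DASM for hyperboloids.) Let κ > 1, X₀ = (x⁰, x⁰_{n+1}) ∈ ℝ^{n+1}, and λ ∈ (0,1). Let v̄, v̂ ∈ ℝⁿ satisfy (κ²−1)|v̄|² < 1 and (κ²−1)|v̂|² < 1, set v_λ = (1−λ)v̄ + λv̂, and let s̄, ŝ, s_λ > 0. Define Ȳ = X₀ + s̄Λ(v̄), Ŷ = X₀ + ŝΛ(v̂), Y_λ = X₀ + s_λΛ(v_λ), and H̄ = s̄Q(v̄), Ĥ = ŝQ(v̂), H_λ = s_λQ(v_λ). Assume the concavity inequality H_λ((1−λ)Ĥ + λH̄) ≤ H̄Ĥ. Then for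 every X = (x, x_{n+1}) ∈ ℝ^{n+1} with κ(x_{n+1} − x⁰_{n+1}) ≤ min{s̄, ŝ}: if c(X, Y_λ) ≥ c(X₀, Y_λ), then c(X, Ȳ) ≥ c(X₀, Ȳ) or c(X, Ŷ) ≥ c(X₀, Ŷ). In other words, the region {X : c(X,Y_λ) ≥ c(X₀,Y_λ)} (intersected with {κ(x_{n+1}−x⁰_{n+1}) ≤ min{s̄,ŝ}}) is contained in the union of the corresponding regions for Ȳ and Ŷ. -/
noncomputable section

open scoped RealInnerProductSpace

/-- Q(v) = (κ − √(1 − (κ²−1)|v|²))/(1 + |v|²). -/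
def Qf {n : ℕ} (κ : ℝ) (v : E n) : ℝ :=
  (κ - Real.sqrt (1 - (κ ^ 2 - 1) * ‖v‖ ^ 2)) / (1 + ‖v‖ ^ 2)

/-- Λ(v) = (Q(v)v, −Q(v) + κ), the refracted unit direction. -/
def Λf {n : ℕ} (κ : ℝ) (v : E n) : E n × ℝ := (Qf κ v • v, κ - Qf κ v)

/-!
Write `w = x - x⁰`, `u = x_{n+1} - x⁰_{n+1}`, `A = |w|² - (κ² - 1)u²` and `P(v) = ⟨w, v⟩ - u`.
Expanding `|X - Y|²`, the point `X` lies in the region of `Y = X₀ + sΛ(v)` iff `κu ≤ s` and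
`A ≤ 2 s Q(v) P(v)`, and `P` is affine in `v`. Suppose `X` is in the middle region but in neither
outer one. If `A > 0`, dividing by `2H` gives `A < A · H_λ ((1 - λ)/H̄ + λ/Ĥ) ≤ A` by concavity.
If `A ≤ 0`, all the `P`'s are negative, so `κu ≤ s_λ` gives `A ≤ 2κu Q(v_λ) P(v_λ)`; but by the
identity `Q²|v|² + (Q - κ)² = 1` the form `A - 2κuQ(v)P(v)` is a sum of two squares that vanishes
only at `w = 0`, `u = 0`, where `P = 0`.
-/

lemma pnorm_nonneg {n : ℕ} (W : E n × ℝ) : 0 ≤ pnorm W := Real.sqrt_nonneg _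

lemma pnorm_sq {n : ℕ} (W : E n × ℝ) : pnorm W ^ 2 = ‖W.1‖ ^ 2 + W.2 ^ 2 := by
  rw [pnorm, Real.sq_sqrt (by positivity)]

section Refraction

variable {n : ℕ} {κ : ℝ} {v : E n}

lemma Qf_pos (hκ : 1 < κ) (v : E n) : 0 < Qf κ v := by
  have hsqrt : Real.sqrt (1 - (κ ^ 2 - 1) * ‖v‖ ^ 2) ≤ 1 :=
    Real.sqrt_le_one.mpr
      (by nlinarith [mul_nonneg (by nlinarith : (0 : ℝ) ≤ κ ^ 2 - 1) (sq_nonneg ‖v‖)])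
  exact div_pos (by linarith) (by positivity)

lemma Qf_sq_mul_norm_sq_add_sq_sub_eq_one (hv : (κ ^ 2 - 1) * ‖v‖ ^ 2 < 1) :
    Qf κ v ^ 2 * ‖v‖ ^ 2 + (Qf κ v - κ) ^ 2 = 1 := by
  have hsqrt := Real.sq_sqrt (by linarith : 0 ≤ 1 - (κ ^ 2 - 1) * ‖v‖ ^ 2)
  have hden : 1 + ‖v‖ ^ 2 ≠ 0 := by positivity
  rw [Qf]
  field_simp
  linear_combination (1 + ‖v‖ ^ 2) * hsqrt

lemma convex_setOf_mul_norm_sq_lt_one (hκ : 1 < κ) :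
    Convex ℝ {v : E n | (κ ^ 2 - 1) * ‖v‖ ^ 2 < 1} := by
  have hconv : ConvexOn ℝ Set.univ fun v : E n => (κ ^ 2 - 1) • ‖v‖ ^ 2 :=
    ((convexOn_norm convex_univ).pow (fun v _ => norm_nonneg v) 2).smul (by nlinarith)
  simpa using hconv.convex_lt 1

lemma norm_sq_sub_mul_sq_sub_mul_inner_eq {Q u : ℝ} (w : E n)
    (hQ : Q ^ 2 * ‖v‖ ^ 2 + (Q - κ) ^ 2 = 1) :
    ‖w‖ ^ 2 - (κ ^ 2 - 1) * u ^ 2 - 2 * (κ * u) * Q * (⟪w, v⟫ - u)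
      = ‖w - (κ * Q * u) • v‖ ^ 2 + (u * (κ * (κ - Q) - 1)) ^ 2 := by
  rw [norm_sub_sq_real, real_inner_smul_right, norm_smul, Real.norm_eq_abs, mul_pow, sq_abs]
  linear_combination (-(κ ^ 2 * u ^ 2)) * hQ

lemma eq_zero_of_norm_sq_sub_mul_sq_le_mul_inner (hκ : 1 < κ)
    (hv : (κ ^ 2 - 1) * ‖v‖ ^ 2 < 1) {w : E n} {u : ℝ}
    (h : ‖w‖ ^ 2 - (κ ^ 2 - 1) * u ^ 2 ≤ 2 * (κ * u) * Qf κ v * (⟪w, v⟫ - u)) :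
    w = 0 ∧ u = 0 := by
  have hQ := Qf_sq_mul_norm_sq_add_sq_sub_eq_one hv
  have hsum := norm_sq_sub_mul_sq_sub_mul_inner_eq (u := u) w hQ
  have hsq₁ : ‖w - (κ * Qf κ v * u) • v‖ ^ 2 = 0 := by
    linarith [sq_nonneg ‖w - (κ * Qf κ v * u) • v‖, sq_nonneg (u * (κ * (κ - Qf κ v) - 1))]
  have hsq₂ : (u * (κ * (κ - Qf κ v) - 1)) ^ 2 = 0 := by
    linarith [sq_nonneg ‖w - (κ * Qf κ v * u) • v‖, sq_nonneg (u * (κ * (κ - Qf κ v) - 1))]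
  -- `κ(κ - Q) = 1` would force `(κ² - 1)|v|² = 1`
  have hcoef : κ * (κ - Qf κ v) - 1 ≠ 0 := by
    intro hE
    have hzero : (κ ^ 2 - 1) * ((κ ^ 2 - 1) * ‖v‖ ^ 2 - 1) = 0 := by
      linear_combination κ ^ 2 * hQ
        + ((κ ^ 2 - 1 + κ * Qf κ v) * ‖v‖ ^ 2 - (1 + κ ^ 2 - κ * Qf κ v)) * hE
    have hneg : (κ ^ 2 - 1) * ((κ ^ 2 - 1) * ‖v‖ ^ 2 - 1) < 0 :=
      mul_neg_of_pos_of_neg (by nlinarith) (by linarith)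
    linarith
  have hu : u = 0 := by
    simpa [hcoef] using hsq₂
  refine ⟨?_, hu⟩
  simpa [hu] using hsq₁

lemma pnorm_sub_add_smul_Λf_sq (hv : (κ ^ 2 - 1) * ‖v‖ ^ 2 < 1) (X₀ X : E n × ℝ) (s : ℝ) :
    pnorm (X - (X₀ + s • Λf κ v)) ^ 2
      = (s - κ * (X.2 - X₀.2)) ^ 2 + (‖X.1 - X₀.1‖ ^ 2 - (κ ^ 2 - 1) * (X.2 - X₀.2) ^ 2
          - 2 * s * Qf κ v * (⟪X.1 - X₀.1, v⟫ - (X.2 - X₀.2))) := by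
  have hcoord : X - (X₀ + s • Λf κ v)
      = (X.1 - X₀.1 - (s * Qf κ v) • v, X.2 - X₀.2 - s * (κ - Qf κ v)) := by
    ext <;> simp [Λf, smul_smul, sub_add_eq_sub_sub]
  rw [hcoord, pnorm_sq, norm_sub_sq_real, real_inner_smul_right, norm_smul, Real.norm_eq_abs,
    mul_pow, sq_abs]
  linear_combination s ^ 2 * Qf_sq_mul_norm_sq_add_sq_sub_eq_one hv

lemma cfun_le_cfun_add_smul_Λf_iff (hv : (κ ^ 2 - 1) * ‖v‖ ^ 2 < 1) (X₀ X : E n × ℝ) {s : ℝ}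
    (hs : 0 < s) :
    cfun κ X₀ (X₀ + s • Λf κ v) ≤ cfun κ X (X₀ + s • Λf κ v) ↔
      κ * (X.2 - X₀.2) ≤ s ∧
        ‖X.1 - X₀.1‖ ^ 2 - (κ ^ 2 - 1) * (X.2 - X₀.2) ^ 2
          ≤ 2 * s * Qf κ v * (⟪X.1 - X₀.1, v⟫ - (X.2 - X₀.2)) := by
  have hX₀ : pnorm (X₀ - (X₀ + s • Λf κ v)) = s := by
    rw [← Real.sqrt_sq (pnorm_nonneg _), pnorm_sub_add_smul_Λf_sq hv]
    simpa using Real.sqrt_sq hs.le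
  have hdist : cfun κ X₀ (X₀ + s • Λf κ v) ≤ cfun κ X (X₀ + s • Λf κ v) ↔
      pnorm (X - (X₀ + s • Λf κ v)) ≤ s - κ * (X.2 - X₀.2) := by
    unfold cfun
    rw [hX₀]
    constructor <;> intro h <;> linarith
  rw [hdist, ← Real.sqrt_sq (pnorm_nonneg _), Real.sqrt_le_iff, pnorm_sub_add_smul_Λf_sq hv]
  exact and_congr sub_nonneg (by constructor <;> intro h <;> linarith)

end Refraction

lemma nonpos_of_mul_harmonic_combination_le {A Pb Ph Hb Hh Hl lam : ℝ}
    (hlam₀ : 0 < lam) (hlam₁ : lam < 1) (hHb : 0 < Hb) (hHh : 0 < Hh) (hHl : 0 < Hl)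
    (hconc : Hl * ((1 - lam) * Hh + lam * Hb) ≤ Hb * Hh)
    (hb : 2 * Hb * Pb < A) (hh : 2 * Hh * Ph < A)
    (hl : A ≤ 2 * Hl * ((1 - lam) * Pb + lam * Ph)) :
    A ≤ 0 := by
  by_contra! hA
  have f1 := mul_lt_mul_of_pos_left hb (mul_pos (mul_pos (sub_pos.2 hlam₁) hHh) hHl)
  have f2 := mul_lt_mul_of_pos_left hh (mul_pos (mul_pos hlam₀ hHb) hHl)
  have f3 := mul_le_mul_of_nonneg_left hconc hA.le
  have f4 := mul_le_mul_of_nonneg_left hl (mul_pos hHb hHh).le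
  linarith

theorem stmt_12_general {n : ℕ} (κ : ℝ) (hκ : 1 < κ)
    (X₀ : E n × ℝ) (lam : ℝ) (hlam : lam ∈ Set.Ioo (0:ℝ) 1)
    (vb vh : E n) (hvb : (κ ^ 2 - 1) * ‖vb‖ ^ 2 < 1) (hvh : (κ ^ 2 - 1) * ‖vh‖ ^ 2 < 1)
    (sb sh sl : ℝ) (hsb : 0 < sb) (hsh : 0 < sh) (hsl : 0 < sl)
    (hconc : (sl * Qf κ ((1 - lam) • vb + lam • vh)) *
        ((1 - lam) * (sh * Qf κ vh) + lam * (sb * Qf κ vb))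
      ≤ (sb * Qf κ vb) * (sh * Qf κ vh))
    (X : E n × ℝ) (hX : κ * (X.2 - X₀.2) ≤ min sb sh)
    (hXl : cfun κ X₀ (X₀ + sl • Λf κ ((1 - lam) • vb + lam • vh))
        ≤ cfun κ X (X₀ + sl • Λf κ ((1 - lam) • vb + lam • vh))) :
    cfun κ X₀ (X₀ + sb • Λf κ vb) ≤ cfun κ X (X₀ + sb • Λf κ vb) ∨
    cfun κ X₀ (X₀ + sh • Λf κ vh) ≤ cfun κ X (X₀ + sh • Λf κ vh) := by
  obtain ⟨hlam₀, hlam₁⟩ := hlam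
  set vl := (1 - lam) • vb + lam • vh
  have hvl : (κ ^ 2 - 1) * ‖vl‖ ^ 2 < 1 :=
    convex_setOf_mul_norm_sq_lt_one hκ hvb hvh (by linarith) hlam₀.le (by ring)
  rw [cfun_le_cfun_add_smul_Λf_iff hvl X₀ X hsl] at hXl
  rw [cfun_le_cfun_add_smul_Λf_iff hvb X₀ X hsb, cfun_le_cfun_add_smul_Λf_iff hvh X₀ X hsh,
    and_iff_right (hX.trans (min_le_left _ _)), and_iff_right (hX.trans (min_le_right _ _))]
  obtain ⟨hul, hl⟩ := hXl
  set w := X.1 - X₀.1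
  set u := X.2 - X₀.2
  by_contra! ⟨hb, hh⟩
  have hPl : ⟪w, vl⟫ - u = (1 - lam) * (⟪w, vb⟫ - u) + lam * (⟪w, vh⟫ - u) := by
    simp only [vl, inner_add_right, real_inner_smul_right]
    ring
  have hA := nonpos_of_mul_harmonic_combination_le (A := ‖w‖ ^ 2 - (κ ^ 2 - 1) * u ^ 2)
    (Pb := ⟪w, vb⟫ - u) (Ph := ⟪w, vh⟫ - u) hlam₀ hlam₁ (mul_pos hsb (Qf_pos hκ vb))
    (mul_pos hsh (Qf_pos hκ vh)) (mul_pos hsl (Qf_pos hκ vl)) hconc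
    (by linarith) (by linarith) (by rw [← hPl]; linarith)
  have hPb : ⟪w, vb⟫ - u < 0 :=
    neg_of_mul_neg_right (hb.trans_le hA) (mul_pos (mul_pos two_pos hsb) (Qf_pos hκ vb)).le
  have hPh : ⟪w, vh⟫ - u < 0 :=
    neg_of_mul_neg_right (hh.trans_le hA) (mul_pos (mul_pos two_pos hsh) (Qf_pos hκ vh)).le
  have hPl_neg : ⟪w, vl⟫ - u < 0 := by
    rw [hPl]
    linarith [mul_neg_of_pos_of_neg (sub_pos.2 hlam₁) hPb, mul_neg_of_pos_of_neg hlam₀ hPh]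
  have hle : ‖w‖ ^ 2 - (κ ^ 2 - 1) * u ^ 2 ≤ 2 * (κ * u) * Qf κ vl * (⟪w, vl⟫ - u) := by
    have := mul_nonpos_of_nonneg_of_nonpos (sub_nonneg.2 hul)
      (mul_neg_of_pos_of_neg (Qf_pos hκ vl) hPl_neg).le
    linarith
  obtain ⟨hw, hu⟩ := eq_zero_of_norm_sq_sub_mul_sq_le_mul_inner hκ hvl hle
  simp [hw, hu] at hPl_neg

/-- maximum principle (DASM) for hyperboloids under the concavity
inequality expressing condition (AW) along the segment [v̄, v̂]. -/
theorem stmt_12 {n : ℕ} (hn : 1 ≤ n) (κ : ℝ) (hκ : 1 < κ)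
    (X₀ : E n × ℝ) (lam : ℝ) (hlam : lam ∈ Set.Ioo (0:ℝ) 1)
    (vb vh : E n) (hvb : (κ ^ 2 - 1) * ‖vb‖ ^ 2 < 1) (hvh : (κ ^ 2 - 1) * ‖vh‖ ^ 2 < 1)
    (sb sh sl : ℝ) (hsb : 0 < sb) (hsh : 0 < sh) (hsl : 0 < sl)
    (hconc : (sl * Qf κ ((1 - lam) • vb + lam • vh)) *
        ((1 - lam) * (sh * Qf κ vh) + lam * (sb * Qf κ vb))
      ≤ (sb * Qf κ vb) * (sh * Qf κ vh))
    (X : E n × ℝ) (hX : κ * (X.2 - X₀.2) ≤ min sb sh)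
    (hXl : cfun κ X₀ (X₀ + sl • Λf κ ((1 - lam) • vb + lam • vh))
        ≤ cfun κ X (X₀ + sl • Λf κ ((1 - lam) • vb + lam • vh))) :
    cfun κ X₀ (X₀ + sb • Λf κ vb) ≤ cfun κ X (X₀ + sb • Λf κ vb) ∨
    cfun κ X₀ (X₀ + sh • Λf κ vh) ≤ cfun κ X (X₀ + sh • Λf κ vh) :=
  stmt_12_general κ hκ X₀ lam hlam vb vh hvb hvh sb sh sl hsb hsh hsl hconc X hX hXl
end
end

section
/- If u is a parallel refractor under the structural setup, then there exists a structural constant C > 0 (depending only on the bound 2/((κ−1)Δ) for the Hessian D²_xφ, hence only on κ and Δ) such that u((1−s)x̄ + sx̂) ≤ (1−s)u(x̄) + s·u(x̂) + C·s(1−s)|x̄ − x̂|² for all x̄, x̂ ∈ Ω and all s ∈ [0,1]. -/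
noncomputable section

open scoped RealInnerProductSpace

/-!
The supporting hyperboloid `φ_{Y,b}` at a point has the form `const − √(c + ‖x − y‖² / M)` with
`√c = b / M`, `M = κ² − 1`. The square root is semiconcave with Hessian at most `1 / (M√c) = 1 / b`,
so `φ_{Y,b}` is semiconvex with constant `1 / (2b)`, and `u` inherits this at every point where it
is touched from below. The defect is uniform because `b ≥ (κ − 1)Δ`: within distance `Δ` of `y`
the hyperboloid lies above `y_{n+1} − (b + Δ)/(κ − 1)`, while at the contact point it equals
`u ≤ τ₀ ≤ τ₁ − κΔ/(κ − 1)`.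
-/

section SqrtSemiconcavity

variable {F : Type*} [NormedAddCommGroup F] [InnerProductSpace ℝ F]

lemma norm_sq_combo_defect (p q : F) (s : ℝ) :
    (1 - s) * ‖p‖ ^ 2 + s * ‖q‖ ^ 2 - ‖(1 - s) • p + s • q‖ ^ 2 = s * (1 - s) * ‖p - q‖ ^ 2 := by
  rw [norm_add_sq_real, norm_sub_sq_real, norm_smul, norm_smul, real_inner_smul_left,
    real_inner_smul_right, mul_pow, mul_pow, Real.norm_eq_abs, Real.norm_eq_abs, sq_abs, sq_abs]
  ring

lemma le_add_div_of_sq_le_sq_add {x y r Q : ℝ} (hr : 0 < r) (hry : r ≤ y) (hQ : 0 ≤ Q)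
    (h : x ^ 2 ≤ y ^ 2 + Q) : x ≤ y + Q / (2 * r) := by
  have hQr : Q ≤ 2 * y * (Q / (2 * r)) := by
    rw [mul_div_assoc', le_div_iff₀ (by positivity)]
    nlinarith
  have hy : 0 ≤ y := hr.le.trans hry
  refine (abs_le_of_sq_le_sq' (h.trans ?_) (by positivity)).2
  nlinarith [sq_nonneg (Q / (2 * r))]

lemma sqrt_add_norm_sq_semiconcave {c M : ℝ} (hc : 0 < c) (hM : 0 < M) (p q : F) {s : ℝ}
    (hs0 : 0 ≤ s) (hs1 : s ≤ 1) :
    (1 - s) * √(c + ‖p‖ ^ 2 / M) + s * √(c + ‖q‖ ^ 2 / M)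
      ≤ √(c + ‖(1 - s) • p + s • q‖ ^ 2 / M) + s * (1 - s) * ‖p - q‖ ^ 2 / (M * (2 * √c)) := by
  set Fp := √(c + ‖p‖ ^ 2 / M)
  set Fq := √(c + ‖q‖ ^ 2 / M)
  have hFp : Fp ^ 2 = c + ‖p‖ ^ 2 / M := Real.sq_sqrt (by positivity)
  have hFq : Fq ^ 2 = c + ‖q‖ ^ 2 / M := Real.sq_sqrt (by positivity)
  have hFm : √(c + ‖(1 - s) • p + s • q‖ ^ 2 / M) ^ 2 = c + ‖(1 - s) • p + s • q‖ ^ 2 / M :=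
    Real.sq_sqrt (by positivity)
  have hjensen : ((1 - s) * Fp + s * Fq) ^ 2 ≤ (1 - s) * Fp ^ 2 + s * Fq ^ 2 := by
    nlinarith [sq_nonneg (Fp - Fq), mul_nonneg hs0 (sub_nonneg.2 hs1)]
  have hcombo : (1 - s) * Fp ^ 2 + s * Fq ^ 2
      = √(c + ‖(1 - s) • p + s • q‖ ^ 2 / M) ^ 2 + s * (1 - s) * ‖p - q‖ ^ 2 / M := by
    rw [hFp, hFq, hFm, ← norm_sq_combo_defect p q s]
    field_simp
    ring
  rw [← div_div]
  refine le_add_div_of_sq_le_sq_add (Real.sqrt_pos.2 hc)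
    (Real.sqrt_le_sqrt (le_add_of_nonneg_right (by positivity))) ?_ (hjensen.trans hcombo.le)
  have := mul_nonneg hs0 (sub_nonneg.2 hs1)
  positivity

end SqrtSemiconcavity

section Hyperboloid

variable {n : ℕ} {κ : ℝ}

lemma hypb_semiconvex (hκ : 1 < κ) (Y : E n × ℝ) {b : ℝ} (hb : 0 < b) (a a' : E n) {s : ℝ}
    (hs0 : 0 ≤ s) (hs1 : s ≤ 1) :
    hypb κ Y b ((1 - s) • a + s • a') ≤ (1 - s) * hypb κ Y b a + s * hypb κ Y b a'
      + 1 / (2 * b) * s * (1 - s) * ‖a - a'‖ ^ 2 := by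
  have hM : 0 < κ ^ 2 - 1 := by nlinarith
  have hsqrt : √(b ^ 2 / (κ ^ 2 - 1) ^ 2) = b / (κ ^ 2 - 1) := by
    rw [← div_pow, Real.sqrt_sq (by positivity)]
  have key := sqrt_add_norm_sq_semiconcave (c := b ^ 2 / (κ ^ 2 - 1) ^ 2) (by positivity) hM
    (a - Y.1) (a' - Y.1) hs0 hs1
  rw [hsqrt, show (1 - s) • (a - Y.1) + s • (a' - Y.1) = (1 - s) • a + s • a' - Y.1 by module,
    sub_sub_sub_cancel_right] at key
  have hdefect : s * (1 - s) * ‖a - a'‖ ^ 2 / ((κ ^ 2 - 1) * (2 * (b / (κ ^ 2 - 1))))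
      = 1 / (2 * b) * s * (1 - s) * ‖a - a'‖ ^ 2 := by
    field_simp
  simp only [hypb]
  linarith

lemma sub_div_le_hypb (hκ : 1 < κ) (Y : E n × ℝ) {b : ℝ} (hb : 0 ≤ b) (x : E n) :
    Y.2 - (b + ‖x - Y.1‖) / (κ - 1) ≤ hypb κ Y b x := by
  have hκ1 : 0 < κ - 1 := by linarith
  have hM : 0 < κ ^ 2 - 1 := by nlinarith
  have hsqrt : √(b ^ 2 / (κ ^ 2 - 1) ^ 2 + ‖x - Y.1‖ ^ 2 / (κ ^ 2 - 1))
      ≤ b / (κ ^ 2 - 1) + ‖x - Y.1‖ / (κ - 1) := by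
    rw [Real.sqrt_le_left (by positivity), add_sq, div_pow, div_pow]
    have : ‖x - Y.1‖ ^ 2 / (κ ^ 2 - 1) ≤ ‖x - Y.1‖ ^ 2 / (κ - 1) ^ 2 :=
      div_le_div_of_nonneg_left (by positivity) (by positivity) (by nlinarith)
    have : 0 ≤ 2 * (b / (κ ^ 2 - 1)) * (‖x - Y.1‖ / (κ - 1)) := by positivity
    linarith
  have hsplit : κ * b / (κ ^ 2 - 1) + b / (κ ^ 2 - 1) = b / (κ - 1) := by
    field_simp
    ring
  rw [hypb, add_div]
  linarith

lemma sub_one_mul_le_of_hypb_le {τ₀ Δ b : ℝ} (hκ : 1 < κ) {Y : E n × ℝ} (hb : 0 ≤ b) {x : E n}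
    (hx : ‖x - Y.1‖ ≤ Δ) (hY : τ₀ + κ * Δ / (κ - 1) ≤ Y.2) (hτ₀ : hypb κ Y b x ≤ τ₀) :
    (κ - 1) * Δ ≤ b := by
  have hκ1 : 0 < κ - 1 := by linarith
  have hlow := sub_div_le_hypb hκ Y hb x
  have : κ * Δ / (κ - 1) ≤ (b + ‖x - Y.1‖) / (κ - 1) := by linarith
  rw [div_le_div_iff_of_pos_right hκ1] at this
  linarith

end Hyperboloid

theorem stmt_14_general {n : ℕ} (κ : ℝ) (hκ : 1 < κ)
    (Ω : Set (E n)) (hΩconv : Convex ℝ Ω)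
    (hΩb : Bornology.IsBounded Ω)
    (Tgt : Set (E n × ℝ))
    (τ₀ τ₁ ω Δ : ℝ) (hΔpos : 0 < Δ)
    (hslab : ∀ Y ∈ Tgt, Y.2 ∈ Set.Icc τ₁ (τ₁ + ω))
    (hΔ : ∀ Y ∈ Tgt, Metric.diam (Ω ∪ {Y.1}) ≤ Δ)
    (hcompat : max (κ * τ₀) (τ₀ + κ * Δ / (κ - 1)) ≤ τ₁)
    (u : E n → ℝ) (hurange : ∀ x ∈ Ω, u x ∈ Set.Icc 0 τ₀)
    (hu : ∀ x₀ ∈ Ω, ∃ Y ∈ Tgt, ∃ b : ℝ, 0 < b ∧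
      b < κ * Y.2 - Real.sqrt (Y.2 ^ 2 + Δ ^ 2) ∧
      (∀ x ∈ Ω, hypb κ Y b x ≤ u x) ∧ u x₀ = hypb κ Y b x₀)
    : ∃ C : ℝ, 0 < C ∧
      ∀ xb ∈ Ω, ∀ xh ∈ Ω, ∀ s ∈ Set.Icc (0:ℝ) 1,
        u ((1 - s) • xb + s • xh)
          ≤ (1 - s) * u xb + s * u xh + C * s * (1 - s) * ‖xb - xh‖ ^ 2 := by
  have hκ1 : 0 < κ - 1 := by linarith
  refine ⟨1 / (2 * ((κ - 1) * Δ)), by positivity, ?_⟩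
  rintro xb hxb xh hxh s ⟨hs0, hs1⟩
  set m := (1 - s) • xb + s • xh
  have hm : m ∈ Ω := hΩconv hxb hxh (by linarith) hs0 (by ring)
  obtain ⟨Y, hY, b, hb, -, hsupp, htouch⟩ := hu m hm
  have hdist : ‖m - Y.1‖ ≤ Δ := by
    rw [← dist_eq_norm]
    exact (Metric.dist_le_diam_of_mem (hΩb.union Bornology.isBounded_singleton)
      (Or.inl hm) (Or.inr rfl)).trans (hΔ Y hY)
  have hb_ge : (κ - 1) * Δ ≤ b :=
    sub_one_mul_le_of_hypb_le hκ hb.le hdist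
      ((le_max_right _ _).trans (hcompat.trans (hslab Y hY).1)) (htouch ▸ (hurange m hm).2)
  calc u m = hypb κ Y b m := htouch
    _ ≤ (1 - s) * hypb κ Y b xb + s * hypb κ Y b xh + 1 / (2 * b) * s * (1 - s) * ‖xb - xh‖ ^ 2 :=
      hypb_semiconvex hκ Y hb xb xh hs0 hs1
    _ ≤ (1 - s) * u xb + s * u xh + 1 / (2 * ((κ - 1) * Δ)) * s * (1 - s) * ‖xb - xh‖ ^ 2 := by
      gcongr
      · exact hsupp xb hxb
      · exact hsupp xh hxh

/-- semiconvexity of parallel refractors: a quadratic convexity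
defect estimate with a structural constant. -/
theorem stmt_14 {n : ℕ} (hn : 1 ≤ n) (κ : ℝ) (hκ : 1 < κ)
    (Ω : Set (E n)) (hΩo : IsOpen Ω) (hΩconv : Convex ℝ Ω)
    (hΩb : Bornology.IsBounded Ω) (hΩne : Ω.Nonempty)
    (Tgt : Set (E n × ℝ)) (hTc : IsCompact Tgt) (hTne : Tgt.Nonempty)
    (τ₀ τ₁ ω Δ : ℝ) (hτ₀ : 0 < τ₀) (hτ : τ₀ < τ₁) (hω : 0 < ω) (hΔpos : 0 < Δ)
    (hslab : ∀ Y ∈ Tgt, Y.2 ∈ Set.Icc τ₁ (τ₁ + ω))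
    (hΔ : ∀ Y ∈ Tgt, Metric.diam (Ω ∪ {Y.1}) ≤ Δ)
    (hcompat : max (κ * τ₀) (τ₀ + κ * Δ / (κ - 1)) ≤ τ₁)
    (u : E n → ℝ) (hurange : ∀ x ∈ Ω, u x ∈ Set.Icc 0 τ₀)
    (hu : ∀ x₀ ∈ Ω, ∃ Y ∈ Tgt, ∃ b : ℝ, 0 < b ∧
      b < κ * Y.2 - Real.sqrt (Y.2 ^ 2 + Δ ^ 2) ∧
      (∀ x ∈ Ω, hypb κ Y b x ≤ u x) ∧ u x₀ = hypb κ Y b x₀)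
    : ∃ C : ℝ, 0 < C ∧
      ∀ xb ∈ Ω, ∀ xh ∈ Ω, ∀ s ∈ Set.Icc (0:ℝ) 1,
        u ((1 - s) • xb + s • xh)
          ≤ (1 - s) * u xb + s * u xh + C * s * (1 - s) * ‖xb - xh‖ ^ 2 :=
  stmt_14_general κ hκ Ω hΩconv hΩb Tgt τ₀ τ₁ ω Δ hΔpos hslab hΔ hcompat u hurange hu
end
end
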